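/- arXiv:2004.11661 — 3 statements merged into one kernel-verified Lean document; each statement's English description precedes it below -/
import Mathlib

section
/- Let ρ > 0, n ∈ ℕ, and let g_n(t) = P_n(t₁)·e^{ρ(t−t₁)} − P_{n−1}(t) where P_m(t) = ∑_{k=0}^{m} (ρt)^k / k! and 0 < t₁. Then g_n(t) ≥ 0 for all t ≥ t₁. -/
/-! Write `x = ρ t₁` and `h = ρ (t - t₁)`. By the binomial theorem the Taylor partial sum of `exp`
at `x + h` is the Cauchy product `∑_{i + j < N} (x^i / i!) (h^j / j!)`; for `x, h ≥ 0` each inner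
sum over `j` is at most `exp h`, so `P_{n-1}(x + h) ≤ P_{n-1}(x) exp h ≤ P_n(x) exp h`. -/

open Finset Nat Real

theorem add_pow_div_factorial (x y : ℝ) (k : ℕ) :
    (x + y) ^ k / k ! = ∑ i ∈ range (k + 1), x ^ i / i ! * (y ^ (k - i) / (k - i)!) := by
  rw [add_pow, sum_div]
  refine sum_congr rfl fun i hi => ?_
  have hik : i ≤ k := le_of_lt_succ (mem_range.1 hi)
  have hchoose : (k.choose i : ℝ) ≠ 0 := cast_ne_zero.2 (choose_pos hik).ne'
  rw [← choose_mul_factorial_mul_factorial hik]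
  push_cast
  field_simp

theorem sum_range_add_pow_div_factorial_le {x h : ℝ} (hx : 0 ≤ x) (hh : 0 ≤ h) (N : ℕ) :
    ∑ k ∈ range N, (x + h) ^ k / k ! ≤ (∑ i ∈ range N, x ^ i / i !) * exp h := by
  calc ∑ k ∈ range N, (x + h) ^ k / k !
      = ∑ i ∈ range N, x ^ i / i ! * ∑ j ∈ range (N - i), h ^ j / j ! := by
        simp_rw [add_pow_div_factorial, range_eq_Ico, ← sum_Ico_Ico_comm, mul_sum,
          sum_Ico_eq_sum_range, Nat.add_sub_cancel_left, tsub_zero, zero_add]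
    _ ≤ ∑ i ∈ range N, x ^ i / i ! * exp h := by
        gcongr with i
        exact sum_le_exp_of_nonneg hh _
    _ = (∑ i ∈ range N, x ^ i / i !) * exp h := (sum_mul ..).symm

theorem flow_minus_taylor_nonneg (ρ : ℝ) (hρ : 0 < ρ) (n : ℕ) (t₁ : ℝ) (ht₁ : 0 < t₁)
    (t : ℝ) (ht : t₁ ≤ t) :
    0 ≤ (∑ k ∈ Finset.range (n + 1), (ρ * t₁) ^ k / (Nat.factorial k)) *
          Real.exp (ρ * (t - t₁)) -
        ∑ k ∈ Finset.range ((n - 1) + 1), (ρ * t) ^ k / (Nat.factorial k) := by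
  have hx : 0 ≤ ρ * t₁ := by positivity
  have hh : 0 ≤ ρ * (t - t₁) := mul_nonneg hρ.le (sub_nonneg.2 ht)
  have hsplit : ρ * t = ρ * t₁ + ρ * (t - t₁) := by ring
  rw [sub_nonneg, hsplit]
  calc ∑ k ∈ range (n - 1 + 1), (ρ * t₁ + ρ * (t - t₁)) ^ k / k !
      ≤ (∑ k ∈ range (n - 1 + 1), (ρ * t₁) ^ k / k !) * exp (ρ * (t - t₁)) :=
        sum_range_add_pow_div_factorial_le hx hh _
    _ ≤ (∑ k ∈ range (n + 1), (ρ * t₁) ^ k / k !) * exp (ρ * (t - t₁)) := by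
        gcongr
        omega
end

section
/- Fix ρ > 0, μ > 1, and t₀ > 0. There exists n₀ ∈ ℕ such that for all n ≥ n₀ and all 0 ≤ t₁ ≤ t ≤ t₀, ρμ·P_{n−1}(μt) ≥ ρ·P_n(μt₁)·e^{ρ(t−t₁)}, where P_m(s) = ∑_{k=0}^{m} (ρs)^k / k!. -/
/-! Since `μ ≥ 1` and `t ≥ t₁`, `P_n(μ t₁) e^{ρ(t - t₁)} ≤ e^{ρ μ t₁ + ρ(t - t₁)} ≤ e^{ρ μ t}`.
The partial sums of the exponential series converge to `exp` uniformly on `[0, ρ μ t₀]`, so for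
large `n` they are within the factor `μ > 1` there, i.e. `e^{ρ μ t} ≤ μ P_{n-1}(μ t)`. -/

open Finset Filter Nat

namespace Real

theorem hasSum_pow_div_factorial (x : ℝ) : HasSum (fun k ↦ x ^ k / k !) (exp x) := by
  rw [exp_eq_exp_ℝ]
  exact NormedSpace.expSeries_div_hasSum_exp x

theorem exp_sub_sum_range_le_of_le {x y : ℝ} (hx : 0 ≤ x) (hxy : x ≤ y) (n : ℕ) :
    exp x - ∑ k ∈ range n, x ^ k / k ! ≤ exp y - ∑ k ∈ range n, y ^ k / k ! :=
  hasSum_le (fun k ↦ by gcongr) ((hasSum_nat_add_iff' n).mpr (hasSum_pow_div_factorial x))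
    ((hasSum_nat_add_iff' n).mpr (hasSum_pow_div_factorial y))

theorem one_le_sum_range_pow_div_factorial {x : ℝ} (hx : 0 ≤ x) {n : ℕ} (hn : n ≠ 0) :
    1 ≤ ∑ k ∈ range n, x ^ k / k ! := by
  calc (1 : ℝ) = x ^ 0 / (0 ! : ℝ) := by simp
    _ ≤ ∑ k ∈ range n, x ^ k / k ! :=
      single_le_sum (f := fun k ↦ x ^ k / (k ! : ℝ)) (fun k _ ↦ by positivity)
        (mem_range.mpr (pos_of_ne_zero hn))

/-- On `[0, X]` the error `exp x - ∑ k < n, x ^ k / k !` is largest at `X`, and the partial sums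
are at least `1`, so a small enough additive error is within the factor `c`. -/
theorem eventually_exp_le_mul_sum_range {c : ℝ} (hc : 1 < c) (X : ℝ) :
    ∀ᶠ n in atTop, ∀ x ∈ Set.Icc 0 X, exp x ≤ c * ∑ k ∈ range n, x ^ k / k ! := by
  have htail : Tendsto (fun n ↦ exp X - ∑ k ∈ range n, X ^ k / k !) atTop (nhds 0) := by
    simpa using (hasSum_pow_div_factorial X).tendsto_sum_nat.const_sub (exp X)
  filter_upwards [htail.eventually (eventually_le_nhds (sub_pos.mpr hc)), eventually_ne_atTop 0]
    with n hn hn0 x ⟨hx0, hxX⟩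
  have hone := one_le_sum_range_pow_div_factorial hx0 hn0
  nlinarith [exp_sub_sum_range_le_of_le hx0 hxX n]

end Real

theorem overapprox_deriv_dominates_general (ρ μ t₀ : ℝ) (hρ : 0 < ρ) (hμ : 1 < μ) :
    ∃ n₀ : ℕ, ∀ n ≥ n₀, ∀ t₁ t : ℝ, 0 ≤ t₁ → t₁ ≤ t → t ≤ t₀ →
      ρ * (∑ k ∈ Finset.range (n + 1), (ρ * (μ * t₁)) ^ k / (Nat.factorial k)) *
          Real.exp (ρ * (t - t₁)) ≤
        ρ * μ * ∑ k ∈ Finset.range ((n - 1) + 1), (ρ * (μ * t)) ^ k / (Nat.factorial k) := by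
  obtain ⟨N, hN⟩ :=
    (Real.eventually_exp_le_mul_sum_range hμ (ρ * (μ * t₀))).exists_forall_of_atTop
  refine ⟨N, fun n hn t₁ t ht₁ ht₁t htt₀ ↦ ?_⟩
  have hexponent : ρ * (μ * t₁) + ρ * (t - t₁) ≤ ρ * (μ * t) := by
    nlinarith [mul_nonneg (mul_nonneg hρ.le (sub_nonneg.mpr hμ.le)) (sub_nonneg.mpr ht₁t)]
  have hexp_le : Real.exp (ρ * (μ * t)) ≤
      μ * ∑ k ∈ range (n - 1 + 1), (ρ * (μ * t)) ^ k / k ! :=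
    hN _ (by omega) _ ⟨by have := ht₁.trans ht₁t; positivity, by gcongr⟩
  calc ρ * (∑ k ∈ range (n + 1), (ρ * (μ * t₁)) ^ k / k !) * Real.exp (ρ * (t - t₁))
      ≤ ρ * Real.exp (ρ * (μ * t₁)) * Real.exp (ρ * (t - t₁)) := by
        gcongr
        exact Real.sum_le_exp_of_nonneg (by positivity) _
    _ = ρ * Real.exp (ρ * (μ * t₁) + ρ * (t - t₁)) := by rw [Real.exp_add, mul_assoc]
    _ ≤ ρ * Real.exp (ρ * (μ * t)) := by gcongr
    _ ≤ ρ * μ * ∑ k ∈ range (n - 1 + 1), (ρ * (μ * t)) ^ k / k ! := by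
        rw [mul_assoc]; gcongr

theorem overapprox_deriv_dominates (ρ μ t₀ : ℝ) (hρ : 0 < ρ) (hμ : 1 < μ) (ht₀ : 0 < t₀) :
    ∃ n₀ : ℕ, ∀ n ≥ n₀, ∀ t₁ t : ℝ, 0 ≤ t₁ → t₁ ≤ t → t ≤ t₀ →
      ρ * (∑ k ∈ Finset.range (n + 1), (ρ * (μ * t₁)) ^ k / (Nat.factorial k)) *
          Real.exp (ρ * (t - t₁)) ≤
        ρ * μ * ∑ k ∈ Finset.range ((n - 1) + 1), (ρ * (μ * t)) ^ k / (Nat.factorial k) :=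
  overapprox_deriv_dominates_general ρ μ t₀ hρ hμ
end

section
/- Let ρ₁,…,ρ_k be real numbers, and let 𝕊 = {q ∈ ℝ^k : for all n ∈ ℤ^k, (∑ nᵢρᵢ = 0 → ∑ nᵢqᵢ = 0)}. Let L = {n ∈ ℤ^k : ∑ nᵢρᵢ = 0} and suppose z¹,…,z^m ∈ ℤ^k generate L as a subgroup. Then for s > 1: {(s^{q₁},…,s^{q_k}) : q ∈ 𝕊} = {(w₁,…,w_k) ∈ (0,∞)^k : for all j, ∏ᵢ wᵢ^{zʲᵢ} = 1}. -/
/-! Every `w ∈ (0,∞)^k` is `s ^ q` for the unique exponent vector `q = logb s ∘ w`, and under this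
change of variables the monomial condition `∏ wᵢ ^ nᵢ = 1` becomes the linear condition
`∑ nᵢ qᵢ = 0`. Since the `z j` generate the relation lattice `L` of `ρ`, a linear form vanishes on
`L` exactly when it vanishes on the `z j`, so both sides are the image of `𝕊` under `q ↦ s ^ q`. -/

open Finset

section

variable {ι κ : Type*} [Fintype ι] [Fintype κ]

lemma Real.prod_rpow_zpow_eq_rpow_sum {s : ℝ} (hs : 0 < s) (q : ι → ℝ) (n : ι → ℤ) :
    ∏ i, (s ^ q i) ^ n i = s ^ ∑ i, (n i : ℝ) * q i := by
  rw [Real.rpow_sum_of_pos hs]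
  exact prod_congr rfl fun i _ => by rw [mul_comm, Real.rpow_mul_intCast hs.le]

lemma Real.prod_rpow_zpow_eq_one_iff {s : ℝ} (hs₀ : 0 < s) (hs₁ : s ≠ 1) (q : ι → ℝ)
    (n : ι → ℤ) : ∏ i, (s ^ q i) ^ n i = 1 ↔ ∑ i, (n i : ℝ) * q i = 0 := by
  rw [Real.prod_rpow_zpow_eq_rpow_sum hs₀, ← Real.rpow_zero s, Real.rpow_right_inj hs₀ hs₁]

lemma sum_intCast_mul_eq_zero_of_mem_span {z : κ → ι → ℤ} {q : ι → ℝ}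
    (hzq : ∀ j, ∑ i, (z j i : ℝ) * q i = 0) (c : κ → ℤ) :
    ∑ i, ((∑ j, c j * z j i : ℤ) : ℝ) * q i = 0 := by
  calc ∑ i, ((∑ j, c j * z j i : ℤ) : ℝ) * q i
      = ∑ j, (c j : ℝ) * ∑ i, (z j i : ℝ) * q i := by
        simp only [Int.cast_sum, Int.cast_mul, sum_mul, mul_sum, mul_assoc]
        exact sum_comm
    _ = 0 := by simp [hzq]

lemma forall_relation_iff_forall_generator {ρ : ι → ℝ} {z : κ → ι → ℤ}
    (hz : ∀ j, ∑ i, (z j i : ℝ) * ρ i = 0)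
    (hgen : ∀ n : ι → ℤ, ∑ i, (n i : ℝ) * ρ i = 0 →
      ∃ c : κ → ℤ, n = fun i => ∑ j, c j * z j i) (q : ι → ℝ) :
    (∀ n : ι → ℤ, ∑ i, (n i : ℝ) * ρ i = 0 → ∑ i, (n i : ℝ) * q i = 0) ↔
      ∀ j, ∑ i, (z j i : ℝ) * q i = 0 := by
  refine ⟨fun hq j => hq (z j) (hz j), fun hzq n hn => ?_⟩
  obtain ⟨c, rfl⟩ := hgen n hn
  exact sum_intCast_mul_eq_zero_of_mem_span hzq c

end

theorem fat_cone_exponents_semialgebraic (k m : ℕ) (ρ : Fin k → ℝ)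
    (z : Fin m → (Fin k → ℤ))
    (hz : ∀ j, (∑ i, (z j i : ℝ) * ρ i) = 0)
    (hgen : ∀ n : Fin k → ℤ, (∑ i, (n i : ℝ) * ρ i) = 0 →
      ∃ c : Fin m → ℤ, n = fun i => ∑ j, c j * z j i)
    (s : ℝ) (hs : 1 < s) :
    {w : Fin k → ℝ | ∃ q : Fin k → ℝ,
        (∀ n : Fin k → ℤ, (∑ i, (n i : ℝ) * ρ i) = 0 → (∑ i, (n i : ℝ) * q i) = 0) ∧
        w = fun i => s ^ (q i)} =
      {w : Fin k → ℝ | (∀ i, 0 < w i) ∧ ∀ j, (∏ i, (w i) ^ (z j i)) = 1} := by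
  have hs₀ : 0 < s := one_pos.trans hs
  have hs₁ : s ≠ 1 := hs.ne'
  ext w
  simp only [Set.mem_ofPred_eq, forall_relation_iff_forall_generator hz hgen]
  constructor
  · rintro ⟨q, hq, rfl⟩
    exact ⟨fun i => Real.rpow_pos_of_pos hs₀ _,
      fun j => (Real.prod_rpow_zpow_eq_one_iff hs₀ hs₁ q (z j)).2 (hq j)⟩
  · rintro ⟨hpos, hprod⟩
    have hlog : ∀ i, s ^ Real.logb s (w i) = w i := fun i => Real.rpow_logb hs₀ hs₁ (hpos i)
    refine ⟨fun i => Real.logb s (w i), fun j => ?_, funext fun i => (hlog i).symm⟩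
    rw [← Real.prod_rpow_zpow_eq_one_iff hs₀ hs₁]
    simpa only [hlog] using hprod j
end
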